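/- arXiv:2506.00190 — 5 statements merged into one kernel-verified Lean document; each statement's English description precedes it below -/
import Mathlib

section
/- Generalized Singular Value Decomposition (GSVD): Let A ∈ ℝ^{m×n} and L ∈ ℝ^{p×n} with m ≥ n ≥ p, rank(L) = p, and ker(A) ∩ ker(L) = {0}. Then there exist a matrix U ∈ ℝ^{m×n} with orthonormal columns, a matrix V ∈ ℝ^{p×p} with orthonormal columns, a nonsingular matrix X ∈ ℝ^{n×n}, and diagonal matrices Σ = diag(σ₁,…,σ_p) ∈ ℝ^{p×p} and M = diag(μ₁,…,μ_p) ∈ ℝ^{p×p} such that A = U · [[Σ, 0],[0, I_{n−p}]] · X⁻¹ and L = V · [M, 0] · X⁻¹, where 0 ≤ σ₁ ≤ … ≤ σ_p ≤ 1, 1 ≥ μ₁ ≥ … ≥ μ_p > 0, and σᵢ² + μᵢ² = 1 for i = 1,…,p. -/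
/-!
Since `ker A ∩ ker L = 0`, the matrix `AᵀA + LᵀL` is positive definite, so some invertible `T`
gives `(AT)ᵀ(AT) + (LT)ᵀ(LT) = 1`. An orthogonal `W` diagonalising `(LT)ᵀ(LT)` with decreasing
eigenvalues `d` then yields `X = TW` with `(LX)ᵀ(LX) = diag d` and `(AX)ᵀ(AX) = diag (1 - d)`:
the columns of `AX` and of `LX` are orthogonal. As `rank (diag d) = rank L = p`, exactly the first
`p` entries of `d` are positive. Normalising the columns gives `U` and `V`, with `σ = √(1 - d)` and
`μ = √d` on the first `p` indices.
-/

open Matrix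

theorem Antitone.pos_iff_val_lt_of_card_eq {α : Type*} [Preorder α] [Zero α] {n p : ℕ}
    {d : Fin n → α} (hd : Antitone d) (hcard : Nat.card {j // 0 < d j} = p) (j : Fin n) :
    0 < d j ↔ (j : ℕ) < p := by
  classical
  rw [Nat.card_eq_fintype_card, Fintype.card_subtype] at hcard
  constructor
  · intro hj
    have : Finset.Iic j ⊆ Finset.univ.filter (fun i => 0 < d i) := fun i hi => by
      simpa using hj.trans_le (hd (Finset.mem_Iic.mp hi))
    simpa [hcard] using Finset.card_le_card this
  · intro hj
    by_contra hdj
    have : Finset.univ.filter (fun i => 0 < d i) ⊆ Finset.Iio j := fun i hi => by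
      simp only [Finset.mem_filter, Finset.mem_univ, true_and] at hi
      exact Finset.mem_Iio.mpr (lt_of_not_ge fun hji => hdj (hi.trans_le (hd hji)))
    have := Finset.card_le_card this
    simp only [hcard, Fin.card_Iio] at this
    omega

namespace Matrix

variable {m n l o : Type*}

theorem transpose_mul_self_apply_eq_inner [Fintype m] (B : Matrix m n ℝ) (i j : n) :
    (Bᵀ * B) i j = inner ℝ (WithLp.toLp 2 (Bᵀ i)) (WithLp.toLp 2 (Bᵀ j)) := by
  rw [EuclideanSpace.inner_toLp_toLp, mul_apply', dotProduct_comm]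
  rfl

theorem transpose_mul_self_apply_self_eq_zero_iff [Fintype m] {B : Matrix m n ℝ} {j : n} :
    (Bᵀ * B) j j = 0 ↔ Bᵀ j = 0 :=
  dotProduct_self_eq_zero

theorem nonneg_of_transpose_mul_self_eq_diagonal [Fintype m] [DecidableEq n] {B : Matrix m n ℝ}
    {c : n → ℝ} (hB : Bᵀ * B = diagonal c) (j : n) : 0 ≤ c j := by
  rw [← diagonal_apply_eq c j, ← hB, transpose_mul_self_apply_eq_inner]
  exact real_inner_self_nonneg

theorem transpose_mul_self_mul [Fintype m] [Fintype n] (P : Matrix m n ℝ) (Q : Matrix n l ℝ) :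
    (P * Q)ᵀ * (P * Q) = Qᵀ * (Pᵀ * P) * Q := by
  simp only [transpose_mul, Matrix.mul_assoc]

theorem _root_.Orthonormal.transpose_mul_self_eq_one [Fintype m] [DecidableEq n]
    {v : n → EuclideanSpace ℝ m} (hv : Orthonormal ℝ v) :
    (of fun i j => v j i)ᵀ * of (fun i j => v j i) = 1 := by
  ext i j
  rw [transpose_mul_self_apply_eq_inner, one_apply]
  exact orthonormal_iff_ite.mp hv i j

theorem exists_orthonormal_mul_diagonal [Fintype m] [Fintype n] [DecidableEq n]
    (hmn : Fintype.card n ≤ Fintype.card m) (B : Matrix m n ℝ) (c : n → ℝ)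
    (hB : Bᵀ * B = diagonal (c ^ 2)) :
    ∃ U : Matrix m n ℝ, Uᵀ * U = 1 ∧ B = U * diagonal c := by
  classical
  obtain ⟨f⟩ := Function.Embedding.nonempty_of_card_le hmn
  set col : n → EuclideanSpace ℝ m := fun j => WithLp.toLp 2 (Bᵀ j)
  have hcol (i j : n) : inner ℝ (col i) (col j) = if i = j then c i ^ 2 else 0 := by
    rw [← transpose_mul_self_apply_eq_inner, hB, diagonal_apply, Pi.pow_apply]
  -- The normalised nonzero columns, placed along `f`, extend to an orthonormal basis of `ℝ^m`.
  set v : m → EuclideanSpace ℝ m := Function.extend f (fun j => (c j)⁻¹ • col j) 0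
  have hv : Orthonormal ℝ ((f '' {j | c j ≠ 0}).domRestrict v) := by
    rw [orthonormal_iff_ite]
    rintro ⟨_, i, hi, rfl⟩ ⟨_, j, -, rfl⟩
    simp only [Set.domRestrict_apply, v, f.injective.extend_apply, inner_smul_left,
      inner_smul_right, hcol, conj_trivial]
    by_cases hij : i = j
    · subst hij
      field_simp [show c i ≠ 0 from hi]
      simp
    · simp [hij, Subtype.ext_iff]
  obtain ⟨b, hb⟩ := hv.exists_orthonormalBasis_extension_of_card_eq (by simp)
  refine ⟨of fun i j => b (f j) i, (b.orthonormal.comp f f.injective).transpose_mul_self_eq_one, ?_⟩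
  ext i j
  rw [mul_diagonal, of_apply]
  by_cases hj : c j = 0
  · have hBj : Bᵀ j = 0 := transpose_mul_self_apply_self_eq_zero_iff.mp (by simp [hB, hj])
    rw [hj, mul_zero]
    exact congrFun hBj i
  · rw [hb _ ⟨j, hj, rfl⟩]
    simp only [v, f.injective.extend_apply, col, PiLp.smul_apply, smul_eq_mul]
    field_simp
    rfl

theorem exists_orthonormal_mul_fromBlocks_diagonal_one {ι : Type*} [Fintype m] [Fintype ι]
    [DecidableEq n] [DecidableEq o] [DecidableEq ι] (e : n ⊕ o ≃ ι)
    (hm : Fintype.card ι ≤ Fintype.card m) (B : Matrix m ι ℝ) (c : n → ℝ)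
    (hB : Bᵀ * B = diagonal (Sum.elim (c ^ 2) 1 ∘ e.symm)) :
    ∃ U : Matrix m ι ℝ, Uᵀ * U = 1 ∧
      B = U * (fromBlocks (diagonal c) 0 0 (1 : Matrix o o ℝ)).submatrix e.symm e.symm := by
  have hblocks : (fromBlocks (diagonal c) 0 0 (1 : Matrix o o ℝ)).submatrix e.symm e.symm =
      diagonal (Sum.elim c 1 ∘ e.symm) := by
    rw [← diagonal_one, fromBlocks_diagonal, submatrix_diagonal_equiv]
    rfl
  rw [hblocks]
  refine exists_orthonormal_mul_diagonal hm B _ (hB.trans (congrArg diagonal ?_))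
  ext j
  simp only [Function.comp_apply, Pi.pow_apply]
  cases e.symm j <;> simp

theorem exists_orthonormal_mul_fromCols_diagonal_zero {ι : Type*} [Fintype m] [Fintype n]
    [Fintype o] [Fintype ι] [DecidableEq n] [DecidableEq o] [DecidableEq ι] (e : n ⊕ o ≃ ι)
    (hm : Fintype.card n ≤ Fintype.card m) (B : Matrix m ι ℝ) (c : n → ℝ)
    (hB : Bᵀ * B = diagonal (Sum.elim (c ^ 2) 0 ∘ e.symm)) :
    ∃ U : Matrix m n ℝ, Uᵀ * U = 1 ∧
      B = U * (fromCols (diagonal c) (0 : Matrix n o ℝ)).submatrix id e.symm := by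
  set B' := B.submatrix id e
  have hB' : B'ᵀ * B' = diagonal (Sum.elim (c ^ 2) 0) := by
    rw [transpose_submatrix, ← submatrix_mul _ _ _ _ _ Function.bijective_id, hB,
      submatrix_diagonal_equiv]
    simp
  obtain ⟨U, hU, hB₁⟩ := exists_orthonormal_mul_diagonal hm B'.toCols₁ c <| by
    ext i j
    have := congrFun₂ hB' (.inl i) (.inl j)
    simp only [diagonal_apply, Sum.inl.injEq, Sum.elim_inl, Pi.pow_apply] at this
    exact this
  have hB₂ : B'.toCols₂ = 0 := by
    ext i j
    exact congrFun (transpose_mul_self_apply_self_eq_zero_iff.mp (by rw [hB']; simp)) i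
  refine ⟨U, hU, ?_⟩
  rw [← submatrix_id_id U, ← submatrix_mul _ _ _ _ _ Function.bijective_id, mul_fromCols,
    Matrix.mul_zero, ← hB₁, ← hB₂, fromCols_toCols, submatrix_submatrix]
  simp

theorem posDef_transpose_mul_add_transpose_mul [Fintype m] [Fintype n] [Fintype l]
    (A : Matrix m n ℝ) (L : Matrix l n ℝ) (hker : ∀ v, A *ᵥ v = 0 → L *ᵥ v = 0 → v = 0) :
    (Aᵀ * A + Lᵀ * L).PosDef := by
  have hinj : Function.Injective (fromRows A L).mulVec := by
    rw [← coe_mulVecLin, injective_iff_map_eq_zero]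
    intro v hv
    rw [mulVecLin_apply, fromRows_mulVec] at hv
    exact hker v (funext fun i => congrFun hv (.inl i)) (funext fun i => congrFun hv (.inr i))
  simpa [transpose_fromRows, fromCols_mul_fromRows] using PosDef.conjTranspose_mul_self _ hinj

open scoped MatrixOrder in
theorem PosDef.exists_transpose_mul_mul_eq_one [Fintype n] [DecidableEq n] {S : Matrix n n ℝ}
    (hS : S.PosDef) : ∃ T : Matrix n n ℝ, IsUnit T.det ∧ Tᵀ * S * T = 1 := by
  set R := CFC.sqrt S
  have hRR : R * R = S := CFC.sqrt_mul_sqrt_self S hS.posSemidef.nonneg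
  have hR : Rᵀ = R := (CFC.sqrt_nonneg S).posSemidef.isHermitian
  have hRdet : IsUnit R.det := by
    rw [← isUnit_iff_isUnit_det]
    exact isUnit_of_mul_isUnit_left (hRR ▸ hS.isUnit)
  refine ⟨R⁻¹, isUnit_nonsing_inv_det_iff.mpr hRdet, ?_⟩
  rw [transpose_nonsing_inv, hR, ← hRR, Matrix.mul_assoc, Matrix.mul_assoc,
    mul_nonsing_inv _ hRdet, Matrix.mul_one, nonsing_inv_mul _ hRdet]

theorem IsHermitian.exists_transpose_mul_mul_eq_diagonal_antitone {k : ℕ}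
    {M : Matrix (Fin k) (Fin k) ℝ} (hM : M.IsHermitian) :
    ∃ (W : Matrix (Fin k) (Fin k) ℝ) (d : Fin k → ℝ),
      Wᵀ * W = 1 ∧ Antitone d ∧ Wᵀ * M * W = diagonal d := by
  have hS := isSymmetric_toEuclideanLin_iff.mpr hM
  set b := hS.eigenvectorBasis finrank_euclideanSpace_fin
  set d := hS.eigenvalues finrank_euclideanSpace_fin
  set W : Matrix (Fin k) (Fin k) ℝ := of fun i j => b j i
  have hW : Wᵀ * W = 1 := b.orthonormal.transpose_mul_self_eq_one
  have hMW : M * W = W * diagonal d := by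
    ext i j
    have := congrArg (fun x : EuclideanSpace ℝ (Fin k) => x i)
      (hS.apply_eigenvectorBasis finrank_euclideanSpace_fin j)
    simp only [toLpLin_apply, PiLp.smul_apply, RCLike.ofReal_real_eq_id, id, smul_eq_mul] at this
    rw [mul_diagonal, mul_comm]
    exact this
  refine ⟨W, d, hW, hS.eigenvalues_antitone _, ?_⟩
  rw [Matrix.mul_assoc, hMW, ← Matrix.mul_assoc, hW, Matrix.one_mul]

theorem exists_transpose_mul_self_eq_diagonal [Fintype m] [Fintype l] {k : ℕ}
    (A : Matrix m (Fin k) ℝ) (L : Matrix l (Fin k) ℝ)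
    (hker : ∀ v, A *ᵥ v = 0 → L *ᵥ v = 0 → v = 0) :
    ∃ (X : Matrix (Fin k) (Fin k) ℝ) (d : Fin k → ℝ), IsUnit X.det ∧ Antitone d ∧
      (L * X)ᵀ * (L * X) = diagonal d ∧ (A * X)ᵀ * (A * X) = diagonal (1 - d) := by
  obtain ⟨T, hT, hTST⟩ :=
    (posDef_transpose_mul_add_transpose_mul A L hker).exists_transpose_mul_mul_eq_one
  have hM : ((L * T)ᵀ * (L * T)).IsHermitian := by
    simpa using isHermitian_conjTranspose_mul_self (L * T)
  obtain ⟨W, d, hW, hd, hWMW⟩ := hM.exists_transpose_mul_mul_eq_diagonal_antitone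
  have hsum : (A * T)ᵀ * (A * T) = 1 - (L * T)ᵀ * (L * T) := by
    rw [eq_sub_iff_add_eq, ← hTST]
    simp only [transpose_mul, Matrix.mul_add, Matrix.add_mul, Matrix.mul_assoc]
  refine ⟨T * W, d, ?_, hd, by rw [← Matrix.mul_assoc L, transpose_mul_self_mul, hWMW], ?_⟩
  · rw [det_mul]
    exact hT.mul (isUnit_det_of_left_inverse hW)
  · rw [← Matrix.mul_assoc A, transpose_mul_self_mul, hsum, Matrix.mul_sub, Matrix.sub_mul,
      Matrix.mul_one, hW, hWMW, ← diagonal_one, diagonal_sub]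
    rfl

theorem card_pos_eq_rank_of_transpose_mul_self_eq_diagonal [Fintype l] {k : ℕ}
    {L : Matrix l (Fin k) ℝ} {X : Matrix (Fin k) (Fin k) ℝ} (hX : IsUnit X.det) {d : Fin k → ℝ}
    (hLX : (L * X)ᵀ * (L * X) = diagonal d) : Nat.card {j // 0 < d j} = L.rank := by
  classical
  have hd0 := nonneg_of_transpose_mul_self_eq_diagonal hLX
  rw [Nat.card_eq_fintype_card,
    Fintype.card_congr (Equiv.subtypeEquivRight fun j => (hd0 j).lt_iff_ne'), ← rank_diagonal,
    ← hLX, rank_transpose_mul_self, rank_mul_eq_left_of_isUnit_det _ _ hX]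

end Matrix

/-- Generalized Singular Value Decomposition (GSVD) for a pair `(A, L)` with
`A ∈ ℝ^{m×n}`, `L ∈ ℝ^{p×n}`, `m ≥ n ≥ p` (here `n = p + k`), `rank L = p`
and `ker A ∩ ker L = {0}`. -/
theorem gsvd (m p k : ℕ) (hm : p + k ≤ m)
    (A : Matrix (Fin m) (Fin (p + k)) ℝ) (L : Matrix (Fin p) (Fin (p + k)) ℝ)
    (hrank : L.rank = p)
    (hker : ∀ v : Fin (p + k) → ℝ, A.mulVec v = 0 → L.mulVec v = 0 → v = 0) :
    ∃ (U : Matrix (Fin m) (Fin (p + k)) ℝ) (V : Matrix (Fin p) (Fin p) ℝ)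
      (X : Matrix (Fin (p + k)) (Fin (p + k)) ℝ) (σ μ : Fin p → ℝ),
      Uᵀ * U = 1 ∧ Vᵀ * V = 1 ∧ IsUnit X.det ∧
      A = U * (Matrix.fromBlocks (Matrix.diagonal σ) 0 0
              (1 : Matrix (Fin k) (Fin k) ℝ)).submatrix
            finSumFinEquiv.symm finSumFinEquiv.symm * X⁻¹ ∧
      L = V * (Matrix.fromCols (Matrix.diagonal μ)
              (0 : Matrix (Fin p) (Fin k) ℝ)).submatrix id finSumFinEquiv.symm * X⁻¹ ∧
      Monotone σ ∧ Antitone μ ∧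
      (∀ i, 0 ≤ σ i) ∧ (∀ i, σ i ≤ 1) ∧ (∀ i, 0 < μ i) ∧ (∀ i, μ i ≤ 1) ∧
      (∀ i, σ i ^ 2 + μ i ^ 2 = 1) := by
  obtain ⟨X, d, hX, hd, hLX, hAX⟩ := exists_transpose_mul_self_eq_diagonal A L hker
  have hd0 := nonneg_of_transpose_mul_self_eq_diagonal hLX
  have hd1 (j) : d j ≤ 1 := sub_nonneg.mp (nonneg_of_transpose_mul_self_eq_diagonal hAX j)
  have hpos := hd.pos_iff_val_lt_of_card_eq
    ((card_pos_eq_rank_of_transpose_mul_self_eq_diagonal hX hLX).trans hrank)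
  have hdk (i : Fin k) : d (Fin.natAdd p i) = 0 :=
    le_antisymm (not_lt.mp fun h => by simpa using (hpos _).mp h) (hd0 _)
  have hmono : Antitone fun i => d (Fin.castAdd k i) :=
    hd.comp_monotone (Fin.strictMono_castAdd k).monotone
  set σ : Fin p → ℝ := fun i => √(1 - d (Fin.castAdd k i))
  set μ : Fin p → ℝ := fun i => √(d (Fin.castAdd k i))
  have hAdiag : 1 - d = Sum.elim (σ ^ 2) (1 : Fin k → ℝ) ∘ finSumFinEquiv.symm := by
    ext j
    refine Fin.addCases (fun i => ?_) (fun i => ?_) j <;>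
      simp [σ, Real.sq_sqrt (sub_nonneg.mpr (hd1 _)), hdk]
  have hLdiag : d = Sum.elim (μ ^ 2) (0 : Fin k → ℝ) ∘ finSumFinEquiv.symm := by
    ext j
    refine Fin.addCases (fun i => ?_) (fun i => ?_) j <;> simp [μ, Real.sq_sqrt (hd0 _), hdk]
  obtain ⟨U, hU, hAXU⟩ := exists_orthonormal_mul_fromBlocks_diagonal_one finSumFinEquiv
    (by simpa using hm) (A * X) σ (hAdiag ▸ hAX)
  obtain ⟨V, hV, hLXV⟩ := exists_orthonormal_mul_fromCols_diagonal_zero finSumFinEquiv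
    (by simp) (L * X) μ (hLdiag ▸ hLX)
  refine ⟨U, V, X, σ, μ, hU, hV, hX, by rw [← hAXU, mul_nonsing_inv_cancel_right _ _ hX],
    by rw [← hLXV, mul_nonsing_inv_cancel_right _ _ hX],
    fun i j hij => Real.sqrt_le_sqrt (by linarith [hmono hij]),
    fun i j hij => Real.sqrt_le_sqrt (hmono hij), fun i => Real.sqrt_nonneg _,
    fun i => Real.sqrt_le_one.mpr (by linarith [hd0 (Fin.castAdd k i)]),
    fun i => Real.sqrt_pos.mpr ((hpos _).mpr i.isLt), fun i => Real.sqrt_le_one.mpr (hd1 _),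
    fun i => ?_⟩
  simp only [σ, μ, Real.sq_sqrt (sub_nonneg.mpr (hd1 _)), Real.sq_sqrt (hd0 _)]
  ring
end

section
/- Let J ∈ ℝ^{m×n} and L ∈ ℝ^{p×n} with ker(J) ∩ ker(L) = {0}, let r ∈ ℝ^m, and for λ > 0 let d(λ) := −(JᵀJ + λ LᵀL)⁻¹ Jᵀr. Let P be the orthogonal projector of ℝ^m onto the orthogonal complement of the range of J, and let q ∈ (0,1). Then: (i) ‖r + J d(λ)‖ ≥ ‖P r‖ for every λ > 0; (ii) the function λ ↦ ‖r + J d(λ)‖ is monotonically nondecreasing on (0,∞); (iii) consequently, if ‖P r‖ > q‖r‖, then the equation ‖r + J d(λ)‖ = q‖r‖ has no solution λ > 0. -/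
/-!
`r + J d(λ)` differs from `r` by an element of `range J`, so its projection onto `(range J)ᗮ`
is `Pr`, which gives the lower bound. For `λ > 0`, `d(λ)` solves the normal equations of the
Tikhonov problem `min ‖r + J y‖² + λ‖L y‖²` and hence minimises it; comparing the optimality of
`d(a)` and `d(b)` at both parameters shows that the penalty `‖L d(λ)‖²` decreases and the
residual `‖r + J d(λ)‖²` increases with `λ`.
-/

open Matrix

noncomputable def euclNorm {k : ℕ} (v : Fin k → ℝ) : ℝ :=
  ‖(EuclideanSpace.equiv (Fin k) ℝ).symm v‖

theorem euclNorm_eq_sqrt_dotProduct {k : ℕ} (v : Fin k → ℝ) : euclNorm v = √(v ⬝ᵥ v) := by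
  rw [euclNorm, norm_eq_sqrt_real_inner]
  rfl

theorem Submodule.norm_orthogonalProjectionOnto_orthogonal_le_norm_add {𝕜 E : Type*} [RCLike 𝕜]
    [NormedAddCommGroup E] [InnerProductSpace 𝕜 E] (K : Submodule 𝕜 E)
    [Kᗮ.HasOrthogonalProjection] (z : E) {x : E} (hx : x ∈ K) :
    ‖(Kᗮ.orthogonalProjectionOnto z : E)‖ ≤ ‖z + x‖ := by
  have hproj : Kᗮ.orthogonalProjectionOnto (z + x) = Kᗮ.orthogonalProjectionOnto z := by
    rw [map_add, orthogonalProjectionOnto_orthogonal_apply_eq_zero hx, add_zero]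
  simpa [hproj] using Kᗮ.norm_orthogonalProjectionOnto_apply_le (z + x)

section Tradeoff

variable {𝕜 α : Type*} [Field 𝕜] [LinearOrder 𝕜] [IsStrictOrderedRing 𝕜]
  {F G : α → 𝕜} {x : 𝕜 → α} {s : Set 𝕜}

theorem antitoneOn_penalty_of_isMinimizer
    (hmin : ∀ lam ∈ s, ∀ y, F (x lam) + lam * G (x lam) ≤ F y + lam * G y) :
    AntitoneOn (G ∘ x) s := by
  intro a ha b hb hab
  rcases hab.eq_or_lt with rfl | hlt
  · rfl
  have hsum : (b - a) * (G (x b) - G (x a)) ≤ 0 := by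
    linarith [hmin a ha (x b), hmin b hb (x a)]
  exact le_of_sub_nonpos (nonpos_of_mul_nonpos_right hsum (sub_pos.2 hlt))

theorem monotoneOn_fidelity_of_isMinimizer (hs : s ⊆ Set.Ici 0)
    (hmin : ∀ lam ∈ s, ∀ y, F (x lam) + lam * G (x lam) ≤ F y + lam * G y) :
    MonotoneOn (F ∘ x) s := by
  intro a ha b hb hab
  have hG : G (x b) ≤ G (x a) := antitoneOn_penalty_of_isMinimizer hmin ha hb hab
  show F (x a) ≤ F (x b)
  linarith [hmin a ha (x b), mul_le_mul_of_nonneg_left hG (hs ha : (0 : 𝕜) ≤ a)]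

end Tradeoff

section Tikhonov

variable {R m n p : Type*} [Fintype m] [Fintype n] [Fintype p]

theorem Matrix.dotProduct_self_nonneg [Ring R] [LinearOrder R] [IsStrictOrderedRing R]
    (v : n → R) : 0 ≤ v ⬝ᵥ v :=
  Finset.sum_nonneg fun i _ => mul_self_nonneg (v i)

theorem dotProduct_tikhonov_mulVec [CommRing R] (J : Matrix m n R) (L : Matrix p n R) (lam : R)
    (v : n → R) :
    v ⬝ᵥ (Jᵀ * J + lam • (Lᵀ * L)) *ᵥ v = J *ᵥ v ⬝ᵥ J *ᵥ v + lam * (L *ᵥ v ⬝ᵥ L *ᵥ v) := by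
  simp only [add_mulVec, smul_mulVec, ← mulVec_mulVec, dotProduct_add, dotProduct_smul,
    dotProduct_transpose_mulVec, smul_eq_mul]

theorem isUnit_det_tikhonov [Field R] [LinearOrder R] [IsStrictOrderedRing R] [DecidableEq n]
    {J : Matrix m n R} {L : Matrix p n R}
    (hker : ∀ v : n → R, J *ᵥ v = 0 → L *ᵥ v = 0 → v = 0) {lam : R} (hlam : 0 < lam) :
    IsUnit (Jᵀ * J + lam • (Lᵀ * L)).det := by
  rw [isUnit_iff_ne_zero, Ne, ← exists_mulVec_eq_zero_iff]
  rintro ⟨v, hv, hAv⟩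
  have hquad := dotProduct_tikhonov_mulVec J L lam v
  rw [hAv, dotProduct_zero] at hquad
  have hJ : J *ᵥ v ⬝ᵥ J *ᵥ v = 0 := by
    nlinarith [dotProduct_self_nonneg (J *ᵥ v), dotProduct_self_nonneg (L *ᵥ v)]
  have hL : L *ᵥ v ⬝ᵥ L *ᵥ v = 0 := by
    nlinarith [dotProduct_self_nonneg (J *ᵥ v), dotProduct_self_nonneg (L *ᵥ v)]
  exact hv (hker v (dotProduct_self_eq_zero.1 hJ) (dotProduct_self_eq_zero.1 hL))

theorem tikhonov_normal_equation [CommRing R] [DecidableEq n] {J : Matrix m n R}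
    {L : Matrix p n R} {lam : R} (hA : IsUnit (Jᵀ * J + lam • (Lᵀ * L)).det) {r : m → R}
    {x : n → R} (hx : x = -((Jᵀ * J + lam • (Lᵀ * L))⁻¹ *ᵥ (Jᵀ *ᵥ r))) :
    Jᵀ *ᵥ (r + J *ᵥ x) + lam • (Lᵀ *ᵥ (L *ᵥ x)) = 0 := by
  have hAx : (Jᵀ * J + lam • (Lᵀ * L)) *ᵥ x = -(Jᵀ *ᵥ r) := by
    rw [hx, mulVec_neg, mulVec_mulVec, mul_nonsing_inv _ hA, one_mulVec]
  rw [add_mulVec, smul_mulVec, ← mulVec_mulVec, ← mulVec_mulVec] at hAx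
  rw [mulVec_add, add_assoc, hAx, add_neg_cancel]

theorem tikhonov_objective_add [CommRing R] {J : Matrix m n R} {L : Matrix p n R} {lam : R}
    {r : m → R} {x : n → R}
    (hx : Jᵀ *ᵥ (r + J *ᵥ x) + lam • (Lᵀ *ᵥ (L *ᵥ x)) = 0) (u : n → R) :
    (r + J *ᵥ (x + u)) ⬝ᵥ (r + J *ᵥ (x + u)) + lam * (L *ᵥ (x + u) ⬝ᵥ L *ᵥ (x + u))
      = (r + J *ᵥ x) ⬝ᵥ (r + J *ᵥ x) + lam * (L *ᵥ x ⬝ᵥ L *ᵥ x)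
        + (J *ᵥ u ⬝ᵥ J *ᵥ u + lam * (L *ᵥ u ⬝ᵥ L *ᵥ u)) := by
  have hcross : (r + J *ᵥ x) ⬝ᵥ J *ᵥ u + lam * (L *ᵥ x ⬝ᵥ L *ᵥ u) = 0 := by
    have := congrArg (u ⬝ᵥ ·) hx
    simpa only [dotProduct_add, dotProduct_smul, dotProduct_transpose_mulVec, dotProduct_zero,
      smul_eq_mul] using this
  rw [mulVec_add, mulVec_add, ← add_assoc]
  simp only [add_dotProduct, dotProduct_add, dotProduct_comm (J *ᵥ u), dotProduct_comm (L *ᵥ u)]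
  simp only [add_dotProduct] at hcross
  linear_combination 2 * hcross

theorem tikhonov_objective_le [Field R] [LinearOrder R] [IsStrictOrderedRing R]
    {J : Matrix m n R} {L : Matrix p n R} {lam : R} (hlam : 0 ≤ lam) {r : m → R} {x : n → R}
    (hx : Jᵀ *ᵥ (r + J *ᵥ x) + lam • (Lᵀ *ᵥ (L *ᵥ x)) = 0) (y : n → R) :
    (r + J *ᵥ x) ⬝ᵥ (r + J *ᵥ x) + lam * (L *ᵥ x ⬝ᵥ L *ᵥ x)
      ≤ (r + J *ᵥ y) ⬝ᵥ (r + J *ᵥ y) + lam * (L *ᵥ y ⬝ᵥ L *ᵥ y) := by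
  have h := tikhonov_objective_add hx (y - x)
  rw [add_sub_cancel] at h
  rw [h, le_add_iff_nonneg_right]
  exact add_nonneg (dotProduct_self_nonneg _)
    (mul_nonneg hlam (dotProduct_self_nonneg _))

end Tikhonov

theorem q_condition_not_solvable_general (m n p : ℕ)
    (J : Matrix (Fin m) (Fin n) ℝ) (L : Matrix (Fin p) (Fin n) ℝ)
    (hker : ∀ v : Fin n → ℝ, J.mulVec v = 0 → L.mulVec v = 0 → v = 0)
    (r : Fin m → ℝ) (q : ℝ)
    (d : ℝ → Fin n → ℝ)
    (hd : ∀ lam : ℝ, d lam = -((Jᵀ * J + lam • (Lᵀ * L))⁻¹.mulVec (Jᵀ.mulVec r)))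
    (Pr : EuclideanSpace ℝ (Fin m))
    (hPr : Pr = (Submodule.orthogonalProjection (LinearMap.range (Matrix.toEuclideanLin J))ᗮ
        ((EuclideanSpace.equiv (Fin m) ℝ).symm r) : EuclideanSpace ℝ (Fin m))) :
    (∀ lam : ℝ, 0 < lam → euclNorm (r + J.mulVec (d lam)) ≥ ‖Pr‖) ∧
    MonotoneOn (fun lam : ℝ => euclNorm (r + J.mulVec (d lam))) (Set.Ioi (0 : ℝ)) ∧
    (‖Pr‖ > q * euclNorm r →
      ¬ ∃ lam : ℝ, 0 < lam ∧ euclNorm (r + J.mulVec (d lam)) = q * euclNorm r) := by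
  have hnormal (lam : ℝ) (hlam : 0 < lam) :
      Jᵀ *ᵥ (r + J *ᵥ d lam) + lam • (Lᵀ *ᵥ (L *ᵥ d lam)) = 0 :=
    tikhonov_normal_equation (isUnit_det_tikhonov hker hlam) (hd lam)
  have hlower (lam : ℝ) (_ : 0 < lam) : euclNorm (r + J *ᵥ d lam) ≥ ‖Pr‖ := by
    have hJd : WithLp.toLp 2 (J *ᵥ d lam) ∈ LinearMap.range (toEuclideanLin J) :=
      ⟨WithLp.toLp 2 (d lam), rfl⟩
    have hproj :=
      (LinearMap.range (toEuclideanLin J)).norm_orthogonalProjectionOnto_orthogonal_le_norm_add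
        (WithLp.toLp 2 r) hJd
    rw [← WithLp.toLp_add] at hproj
    rw [hPr]
    exact hproj
  have hresidual : MonotoneOn (fun lam => (r + J *ᵥ d lam) ⬝ᵥ (r + J *ᵥ d lam)) (Set.Ioi 0) :=
    monotoneOn_fidelity_of_isMinimizer (F := fun y => (r + J *ᵥ y) ⬝ᵥ (r + J *ᵥ y))
      (G := fun y => L *ᵥ y ⬝ᵥ L *ᵥ y) Set.Ioi_subset_Ici_self
      fun lam hlam => tikhonov_objective_le (le_of_lt hlam) (hnormal lam hlam)
  refine ⟨hlower, ?_, ?_⟩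
  · simp only [euclNorm_eq_sqrt_dotProduct]
    exact Real.sqrt_monotone.comp_monotoneOn hresidual
  · rintro hgt ⟨lam, hlam, heq⟩
    linarith [hlower lam hlam]

/-- Part (a) of the lemma on the `q`-condition: with `d(λ) = −(JᵀJ + λLᵀL)⁻¹Jᵀr` and `P`
the orthogonal projector onto `(range J)ᗮ`:
(i) `‖r + J d(λ)‖ ≥ ‖Pr‖` for all `λ > 0`;
(ii) `λ ↦ ‖r + J d(λ)‖` is monotonically nondecreasing on `(0,∞)`;
(iii) hence if `‖Pr‖ > q‖r‖` then `‖r + J d(λ)‖ = q‖r‖` has no solution `λ > 0`. -/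
theorem q_condition_not_solvable (m n p : ℕ)
    (J : Matrix (Fin m) (Fin n) ℝ) (L : Matrix (Fin p) (Fin n) ℝ)
    (hker : ∀ v : Fin n → ℝ, J.mulVec v = 0 → L.mulVec v = 0 → v = 0)
    (r : Fin m → ℝ) (q : ℝ) (hq0 : 0 < q) (hq1 : q < 1)
    (d : ℝ → Fin n → ℝ)
    (hd : ∀ lam : ℝ, d lam = -((Jᵀ * J + lam • (Lᵀ * L))⁻¹.mulVec (Jᵀ.mulVec r)))
    (Pr : EuclideanSpace ℝ (Fin m))
    (hPr : Pr = (Submodule.orthogonalProjection (LinearMap.range (Matrix.toEuclideanLin J))ᗮ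
        ((EuclideanSpace.equiv (Fin m) ℝ).symm r) : EuclideanSpace ℝ (Fin m))) :
    (∀ lam : ℝ, 0 < lam → euclNorm (r + J.mulVec (d lam)) ≥ ‖Pr‖) ∧
    MonotoneOn (fun lam : ℝ => euclNorm (r + J.mulVec (d lam))) (Set.Ioi (0 : ℝ)) ∧
    (‖Pr‖ > q * euclNorm r →
      ¬ ∃ lam : ℝ, 0 < lam ∧ euclNorm (r + J.mulVec (d lam)) = q * euclNorm r) :=
  q_condition_not_solvable_general m n p J L hker r q d hd Pr hPr
end

section
/- Let J ∈ ℝ^{m×n} and L ∈ ℝ^{p×n} with ker(J) ∩ ker(L) = {0} admit the GSVD J = U·[[Σ,0],[0,I_{n−p}]]·X⁻¹, L = V·[M,0]·X⁻¹ with generalized singular pairs (σᵢ, μᵢ), i = 1,…,p. Fix F ∈ ℝ^m and q ∈ (0,1), and for λ > 0 and y ∈ ℝ^m define d(λ, y) := −(JᵀJ + λ LᵀL)⁻¹ Jᵀ(F − y) and ω(λ, y) := ‖F − y + J d(λ, y)‖² − q²‖F − y‖². Suppose (λ₀, y₀) with λ₀ > 0 satisfies ω(λ₀, y₀) = 0,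 and suppose there exists an index i ∈ {1,…,p} with σᵢ > 0 and (Uᵀ(F − y₀))ᵢ ≠ 0. Then ω is continuously differentiable in a neighborhood of (λ₀, y₀) with ∂ω/∂λ(λ₀, y₀) > 0, and there exist open neighborhoods of y₀ and λ₀ and a unique continuous function y ↦ λ^q(y) with λ^q(y₀) = λ₀ and ω(λ^q(y), y) = 0 for all y in the neighborhood; in particular, the regularization parameter λ^q depends continuously on the data y. -/
/-!
In GSVD coordinates `c = Uᵀ (F - y)` the discrepancy function is explicit:
`ω(λ, y) = (1 - q²) ‖F - y‖² - ‖c‖² + ∑ⱼ (λ νⱼ² / (δⱼ² + λ νⱼ²))² cⱼ²`,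
where `(δⱼ, νⱼ) = (σᵢ, μᵢ)` on the first `p` coordinates and `(1, 0)` on the last `k`.
Each residual filter factor `λ νⱼ² / (δⱼ² + λ νⱼ²)` is nondecreasing in `λ`, strictly when
`δⱼ νⱼ ≠ 0`, so `∂ω/∂λ > 0` as soon as `cᵢ ≠ 0` for some `i` with `σᵢ > 0`, an open condition
in `y`. Strict monotonicity in `λ` and continuity in `y` then give, by the intermediate value
theorem, a unique root `λ^q(y)` in a fixed interval around `λ₀`; it depends continuously on `y`
because the sign of `ω(λ, ·)` at a fixed `λ` persists near each `y`.
-/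

open Matrix

open Set Filter Topology

theorem euclNorm_sq {k : ℕ} (v : Fin k → ℝ) : euclNorm v ^ 2 = v ⬝ᵥ v := by
  rw [euclNorm, EuclideanSpace.norm_eq, Real.sq_sqrt (by positivity)]
  simp [dotProduct, sq]

noncomputable def residualFilter (δ ν x : ℝ) : ℝ := x * ν ^ 2 / (δ ^ 2 + x * ν ^ 2)

section residualFilter
variable {δ ν x : ℝ}

theorem sq_add_mul_sq_pos (hδν : δ ≠ 0 ∨ ν ≠ 0) (hx : 0 < x) : 0 < δ ^ 2 + x * ν ^ 2 := by
  rcases hδν with h | h <;> positivity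

theorem hasDerivAt_residualFilter (h : δ ^ 2 + x * ν ^ 2 ≠ 0) :
    HasDerivAt (residualFilter δ ν) (δ ^ 2 * ν ^ 2 / (δ ^ 2 + x * ν ^ 2) ^ 2) x := by
  have hnum : HasDerivAt (fun z => z * ν ^ 2) (ν ^ 2) x := by
    simpa using (hasDerivAt_id x).mul_const (ν ^ 2)
  exact (hnum.fun_div (hnum.const_add (δ ^ 2)) h).congr_deriv (by ring)

theorem contDiffOn_residualFilter {N : WithTop ℕ∞} (hδν : δ ≠ 0 ∨ ν ≠ 0) :
    ContDiffOn ℝ N (residualFilter δ ν) (Ioi 0) :=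
  ContDiffOn.div (by fun_prop) (by fun_prop) fun _ hx => (sq_add_mul_sq_pos hδν hx).ne'

end residualFilter

noncomputable def filteredResidualSq {n : Type*} [Fintype n] (δ ν c : n → ℝ) (x : ℝ) : ℝ :=
  ∑ j, residualFilter (δ j) (ν j) x ^ 2 * c j ^ 2

section filteredResidualSq
variable {n : Type*} [Fintype n] {δ ν c : n → ℝ} {x : ℝ}

theorem deriv_filteredResidualSq_pos (hδν : ∀ j, δ j ≠ 0 ∨ ν j ≠ 0) (hx : 0 < x)
    (hc : ∃ j, δ j ≠ 0 ∧ ν j ≠ 0 ∧ c j ≠ 0) : 0 < deriv (filteredResidualSq δ ν c) x := by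
  have hden j := sq_add_mul_sq_pos (hδν j) hx
  have hderiv : HasDerivAt (filteredResidualSq δ ν c)
      (∑ j, 2 * residualFilter (δ j) (ν j) x * (δ j ^ 2 * ν j ^ 2 / (δ j ^ 2 + x * ν j ^ 2) ^ 2) *
        c j ^ 2) x :=
    HasDerivAt.fun_sum fun j _ =>
      (((hasDerivAt_residualFilter (hden j).ne').pow 2).mul_const (c j ^ 2)).congr_deriv (by ring)
  rw [hderiv.deriv]
  obtain ⟨j₀, hδ₀, hν₀, hc₀⟩ := hc
  refine Finset.sum_pos' (fun j _ => ?_) ⟨j₀, Finset.mem_univ _, ?_⟩ <;>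
    · unfold residualFilter
      positivity

theorem contDiffOn_filteredResidualSq {E : Type*} [NormedAddCommGroup E] [NormedSpace ℝ E]
    {N : WithTop ℕ∞} (hδν : ∀ j, δ j ≠ 0 ∨ ν j ≠ 0) {C : E → n → ℝ} (hC : ContDiff ℝ N C) :
    ContDiffOn ℝ N (fun z : ℝ × E => filteredResidualSq δ ν (C z.2) z.1) {z | 0 < z.1} := by
  refine ContDiffOn.sum fun j _ => ContDiffOn.mul (ContDiffOn.pow ?_ 2) ?_
  · exact (contDiffOn_residualFilter (hδν j)).comp contDiff_fst.contDiffOn fun _ hz => hz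
  · exact ((contDiff_pi.1 hC j).comp contDiff_snd).pow 2 |>.contDiffOn

end filteredResidualSq

noncomputable def gsvdDiscrepancy {m n : Type*} [Fintype m] [Fintype n] (q : ℝ) (δ ν : n → ℝ)
    (U : Matrix m n ℝ) (F : m → ℝ) (x : ℝ) (y : m → ℝ) : ℝ :=
  (F - y) ⬝ᵥ (F - y) - (Uᵀ *ᵥ (F - y)) ⬝ᵥ (Uᵀ *ᵥ (F - y)) + filteredResidualSq δ ν (Uᵀ *ᵥ (F - y)) x
    - q ^ 2 * ((F - y) ⬝ᵥ (F - y))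

section gsvdDiscrepancy
variable {m n : Type*} [Fintype m] [Fintype n] {q : ℝ} {δ ν : n → ℝ} {U : Matrix m n ℝ}
  {F : m → ℝ}

theorem contDiffOn_gsvdDiscrepancy (hδν : ∀ j, δ j ≠ 0 ∨ ν j ≠ 0) :
    ContDiffOn ℝ 1 (fun z : ℝ × (m → ℝ) => gsvdDiscrepancy q δ ν U F z.1 z.2) {z | 0 < z.1} := by
  have hC : ContDiff ℝ 1 fun y => Uᵀ *ᵥ (F - y) :=
    (mulVecLin Uᵀ).toContinuousLinearMap.contDiff.comp (by fun_prop)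
  have hb : ContDiff ℝ 1 fun z : ℝ × (m → ℝ) => (F - z.2) ⬝ᵥ (F - z.2) := by
    unfold dotProduct; fun_prop
  have hc : ContDiff ℝ 1 fun z : ℝ × (m → ℝ) => (Uᵀ *ᵥ (F - z.2)) ⬝ᵥ (Uᵀ *ᵥ (F - z.2)) := by
    unfold dotProduct
    exact ContDiff.sum fun j _ => ((contDiff_pi.1 hC j).comp contDiff_snd).mul
      ((contDiff_pi.1 hC j).comp contDiff_snd)
  exact ((hb.contDiffOn.sub hc.contDiffOn).add (contDiffOn_filteredResidualSq hδν hC)).sub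
    (contDiff_const.mul hb).contDiffOn

variable {y : m → ℝ}

theorem deriv_gsvdDiscrepancy_pos (hδν : ∀ j, δ j ≠ 0 ∨ ν j ≠ 0)
    (hc : ∃ j, δ j ≠ 0 ∧ ν j ≠ 0 ∧ (Uᵀ *ᵥ (F - y)) j ≠ 0) {x : ℝ} (hx : 0 < x) :
    0 < deriv (fun x => gsvdDiscrepancy q δ ν U F x y) x := by
  unfold gsvdDiscrepancy
  rw [deriv_sub_const, deriv_const_add]
  exact deriv_filteredResidualSq_pos hδν hx hc

theorem strictMonoOn_gsvdDiscrepancy (hδν : ∀ j, δ j ≠ 0 ∨ ν j ≠ 0)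
    (hc : ∃ j, δ j ≠ 0 ∧ ν j ≠ 0 ∧ (Uᵀ *ᵥ (F - y)) j ≠ 0) :
    StrictMonoOn (fun x => gsvdDiscrepancy q δ ν U F x y) (Ioi 0) := by
  have hpos x (hx : x ∈ Ioi (0 : ℝ)) := deriv_gsvdDiscrepancy_pos (q := q) hδν hc hx
  refine strictMonoOn_of_deriv_pos (convex_Ioi 0) (fun x hx => ?_) (by simpa using hpos)
  exact (differentiableAt_of_deriv_ne_zero (hpos x hx).ne').continuousAt.continuousWithinAt

end gsvdDiscrepancy

theorem exists_continuousOn_root_of_strictMonoOn {Y : Type*} [TopologicalSpace Y]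
    {φ : ℝ × Y → ℝ} {a b x₀ : ℝ} {s : Set Y} {y₀ : Y} (hs : IsOpen s) (hy₀ : y₀ ∈ s)
    (hx₀ : x₀ ∈ Ioo a b) (hroot : φ (x₀, y₀) = 0) (hφ : ContinuousOn φ (Icc a b ×ˢ s))
    (hmono : ∀ y ∈ s, StrictMonoOn (fun x => φ (x, y)) (Icc a b)) :
    ∃ s' ⊆ s, IsOpen s' ∧ y₀ ∈ s' ∧ ∃ g : Y → ℝ, ContinuousOn g s' ∧
      ∀ y ∈ s', g y ∈ Ioo a b ∧ φ (g y, y) = 0 ∧ ∀ x ∈ Ioo a b, φ (x, y) = 0 → x = g y := by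
  have hab : a ≤ b := (hx₀.1.trans hx₀.2).le
  have ha : a ∈ Icc a b := left_mem_Icc.2 hab
  have hb : b ∈ Icc a b := right_mem_Icc.2 hab
  have hcont x (hx : x ∈ Icc a b) : ContinuousOn (fun y => φ (x, y)) s :=
    hφ.comp (continuous_const.prodMk continuous_id).continuousOn fun _ hy => ⟨hx, hy⟩
  set s' := (s ∩ (fun y => φ (a, y)) ⁻¹' Iio 0) ∩ (s ∩ (fun y => φ (b, y)) ⁻¹' Ioi 0)
  have hs' : IsOpen s' :=
    ((hcont a ha).isOpen_inter_preimage hs isOpen_Iio).inter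
      ((hcont b hb).isOpen_inter_preimage hs isOpen_Ioi)
  have hroot_exists : ∀ y ∈ s', ∃ x ∈ Ioo a b, φ (x, y) = 0 := fun y hy =>
    intermediate_value_Ioo hab
      (hφ.comp (continuous_id.prodMk continuous_const).continuousOn fun _ hx => ⟨hx, hy.1.1⟩)
      ⟨hy.1.2, hy.2.2⟩
  choose! g hg_mem hg_root using hroot_exists
  have hg_unique : ∀ y ∈ s', ∀ x ∈ Ioo a b, φ (x, y) = 0 → x = g y := fun y hy x hx hφx =>
    (hmono y hy.1.1).injOn (Ioo_subset_Icc_self hx) (Ioo_subset_Icc_self (hg_mem y hy))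
      (hφx.trans (hg_root y hy).symm)
  refine ⟨s', inter_subset_left.trans inter_subset_left, hs', ?_, g, ?_,
    fun y hy => ⟨hg_mem y hy, hg_root y hy, hg_unique y hy⟩⟩
  · have hx₀' := Ioo_subset_Icc_self hx₀
    exact ⟨⟨hy₀, hroot ▸ hmono y₀ hy₀ ha hx₀' hx₀.1⟩, ⟨hy₀, hroot ▸ hmono y₀ hy₀ hx₀' hb hx₀.2⟩⟩
  -- an `α ∈ [a, b]` with `φ (α, y₁) < 0` keeps `φ (α, y) < 0` near `y₁`, hence stays below `g y`
  refine fun y₁ hy₁ => ContinuousAt.continuousWithinAt <|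
    tendsto_order.2 ⟨fun α hα => ?_, fun β hβ => ?_⟩
  · have hα' : max α a ∈ Icc a b :=
      ⟨le_max_right _ _, max_le (hα.trans (hg_mem y₁ hy₁).2).le hab⟩
    have hneg : φ (max α a, y₁) < 0 := hg_root y₁ hy₁ ▸
      hmono y₁ hy₁.1.1 hα' (Ioo_subset_Icc_self (hg_mem y₁ hy₁)) (max_lt hα (hg_mem y₁ hy₁).1)
    filter_upwards [hs'.mem_nhds hy₁,
      ((hcont _ hα').continuousAt (hs.mem_nhds hy₁.1.1)).eventually (gt_mem_nhds hneg)]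
      with y hy hφy
    rw [← hg_root y hy] at hφy
    exact (le_max_left α a).trans_lt <|
      ((hmono y hy.1.1).lt_iff_lt hα' (Ioo_subset_Icc_self (hg_mem y hy))).1 hφy
  · have hβ' : min β b ∈ Icc a b :=
      ⟨le_min ((hg_mem y₁ hy₁).1.trans hβ).le hab, min_le_right _ _⟩
    have hpos : 0 < φ (min β b, y₁) := hg_root y₁ hy₁ ▸
      hmono y₁ hy₁.1.1 (Ioo_subset_Icc_self (hg_mem y₁ hy₁)) hβ' (lt_min hβ (hg_mem y₁ hy₁).2)
    filter_upwards [hs'.mem_nhds hy₁,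
      ((hcont _ hβ').continuousAt (hs.mem_nhds hy₁.1.1)).eventually (lt_mem_nhds hpos)]
      with y hy hφy
    rw [← hg_root y hy] at hφy
    exact (((hmono y hy.1.1).lt_iff_lt (Ioo_subset_Icc_self (hg_mem y hy)) hβ').1 hφy).trans_le
      (min_le_left β b)

theorem fromBlocks_diagonal_one_submatrix {n p k R : Type*} [DecidableEq n] [DecidableEq p]
    [DecidableEq k] [Zero R] [One R] (e : n ≃ p ⊕ k) (σ : p → R) :
    (fromBlocks (diagonal σ) 0 0 (1 : Matrix k k R)).submatrix e e =
      diagonal (Sum.elim σ 1 ∘ e) := by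
  rw [← diagonal_one, fromBlocks_diagonal, submatrix_diagonal_equiv]
  rfl

theorem transpose_mul_self_fromCols_diagonal_zero {n p k R : Type*} [Fintype p] [DecidableEq n]
    [DecidableEq p] [CommSemiring R] (e : n ≃ p ⊕ k) (μ : p → R) :
    ((fromCols (diagonal μ) (0 : Matrix p k R)).submatrix id e)ᵀ *
        (fromCols (diagonal μ) (0 : Matrix p k R)).submatrix id e =
      diagonal (fun j => Sum.elim μ 0 (e j) ^ 2) := by
  classical
  rw [transpose_submatrix, transpose_fromCols, ← Equiv.coe_refl, submatrix_mul_equiv,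
    fromRows_mul_fromCols, diagonal_transpose, diagonal_mul_diagonal]
  simp only [Matrix.zero_mul, Matrix.mul_zero, transpose_zero]
  rw [← diagonal_zero, fromBlocks_diagonal, submatrix_diagonal_equiv]
  congr 1 with j
  simp only [Function.comp_apply]
  generalize e j = i
  rcases i with i | i <;> simp [sq]

theorem transpose_mul_self_of_orthonormal {n p R : Type*} [Fintype n] [Fintype p] [DecidableEq p]
    [CommRing R] {V : Matrix p p R} (hV : Vᵀ * V = 1) (N : Matrix p n R) (Y : Matrix n n R) :
    (V * N * Y)ᵀ * (V * N * Y) = Yᵀ * (Nᵀ * N) * Y := by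
  simp only [transpose_mul, Matrix.mul_assoc]
  rw [← Matrix.mul_assoc Vᵀ V, hV, Matrix.one_mul]

section GSVD
variable {m n p : Type*} [Fintype m] [Fintype n] [Fintype p] [DecidableEq n]

theorem influence_matrix_eq_of_gsvd {J U : Matrix m n ℝ} {K X : Matrix n n ℝ} {δ κ : n → ℝ}
    (hU : Uᵀ * U = 1) (hX : IsUnit X.det) (hJ : J = U * diagonal δ * X⁻¹)
    (hK : K = X⁻¹ᵀ * diagonal κ * X⁻¹) (hδκ : ∀ j, δ j ^ 2 + κ j ≠ 0) :
    J * (Jᵀ * J + K)⁻¹ * Jᵀ = U * diagonal (fun j => δ j ^ 2 / (δ j ^ 2 + κ j)) * Uᵀ := by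
  have hA : Jᵀ * J + K = X⁻¹ᵀ * diagonal (fun j => δ j ^ 2 + κ j) * X⁻¹ := by
    rw [hJ, hK]
    simp only [transpose_mul, diagonal_transpose, Matrix.mul_assoc]
    rw [← Matrix.mul_assoc Uᵀ U, hU, Matrix.one_mul, ← Matrix.mul_add,
      ← Matrix.mul_assoc (diagonal δ), diagonal_mul_diagonal, ← Matrix.add_mul, diagonal_add]
    simp only [sq]
  have hdiag : diagonal (fun j => δ j ^ 2 + κ j) * diagonal (fun j => (δ j ^ 2 + κ j)⁻¹) = 1 := by
    rw [diagonal_mul_diagonal, ← diagonal_one]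
    exact congrArg diagonal (funext fun j => mul_inv_cancel₀ (hδκ j))
  have hAinv : (Jᵀ * J + K)⁻¹ = X * diagonal (fun j => (δ j ^ 2 + κ j)⁻¹) * Xᵀ := by
    refine inv_eq_right_inv ?_
    rw [hA]
    simp only [Matrix.mul_assoc]
    rw [nonsing_inv_mul_cancel_left _ _ hX, ← Matrix.mul_assoc (diagonal _), hdiag,
      Matrix.one_mul, ← transpose_mul, mul_nonsing_inv _ hX, transpose_one]
  rw [hAinv, hJ]
  simp only [transpose_mul, diagonal_transpose, Matrix.mul_assoc]
  rw [nonsing_inv_mul_cancel_left _ _ hX, ← Matrix.mul_assoc Xᵀ, ← transpose_mul,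
    nonsing_inv_mul _ hX, transpose_one, Matrix.one_mul, ← Matrix.mul_assoc (diagonal _),
    diagonal_mul_diagonal, ← Matrix.mul_assoc (diagonal _) (diagonal δ), diagonal_mul_diagonal]
  congr 3 with j
  ring

theorem sub_mulVec_dotProduct_self_of_orthonormal {U : Matrix m n ℝ} (hU : Uᵀ * U = 1)
    (g : n → ℝ) (b : m → ℝ) :
    (b - (U * diagonal g * Uᵀ) *ᵥ b) ⬝ᵥ (b - (U * diagonal g * Uᵀ) *ᵥ b) =
      b ⬝ᵥ b - (Uᵀ *ᵥ b) ⬝ᵥ (Uᵀ *ᵥ b) + ∑ j, (1 - g j) ^ 2 * (Uᵀ *ᵥ b) j ^ 2 := by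
  set c := Uᵀ *ᵥ b
  have hw : (U * diagonal g * Uᵀ) *ᵥ b = U *ᵥ (g * c) := by
    rw [← mulVec_mulVec, ← mulVec_mulVec, funext (mulVec_diagonal g c)]
    rfl
  have hb : b ⬝ᵥ U *ᵥ (g * c) = c ⬝ᵥ (g * c) := by
    rw [dotProduct_mulVec, ← mulVec_transpose]
  have hUU : U *ᵥ (g * c) ⬝ᵥ U *ᵥ (g * c) = (g * c) ⬝ᵥ (g * c) := by
    rw [dotProduct_mulVec, ← mulVec_transpose, mulVec_mulVec, hU, one_mulVec]
  have hsum : ∑ j, (1 - g j) ^ 2 * c j ^ 2 =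
      c ⬝ᵥ c - 2 * (c ⬝ᵥ (g * c)) + (g * c) ⬝ᵥ (g * c) := by
    simp only [dotProduct, Pi.mul_apply, Finset.mul_sum, ← Finset.sum_sub_distrib,
      ← Finset.sum_add_distrib]
    exact Finset.sum_congr rfl fun j _ => by ring
  rw [hw, sub_dotProduct, dotProduct_sub, dotProduct_sub, hb, dotProduct_comm (U *ᵥ _) b, hb, hUU,
    hsum]
  ring

theorem tikhonov_residual_dotProduct_self {J U : Matrix m n ℝ} {L : Matrix p n ℝ}
    {X : Matrix n n ℝ} {δ ν : n → ℝ} (hU : Uᵀ * U = 1) (hX : IsUnit X.det)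
    (hJ : J = U * diagonal δ * X⁻¹) (hL : Lᵀ * L = X⁻¹ᵀ * diagonal (fun j => ν j ^ 2) * X⁻¹)
    {x : ℝ} (hx : ∀ j, δ j ^ 2 + x * ν j ^ 2 ≠ 0) (b : m → ℝ) :
    (b + J *ᵥ -((Jᵀ * J + x • (Lᵀ * L))⁻¹ *ᵥ (Jᵀ *ᵥ b))) ⬝ᵥ
        (b + J *ᵥ -((Jᵀ * J + x • (Lᵀ * L))⁻¹ *ᵥ (Jᵀ *ᵥ b))) =
      b ⬝ᵥ b - (Uᵀ *ᵥ b) ⬝ᵥ (Uᵀ *ᵥ b) + filteredResidualSq δ ν (Uᵀ *ᵥ b) x := by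
  have hK : x • (Lᵀ * L) = X⁻¹ᵀ * diagonal (fun j => x * ν j ^ 2) * X⁻¹ := by
    rw [hL, ← Matrix.smul_mul, ← Matrix.mul_smul, ← diagonal_smul]
    rfl
  rw [mulVec_neg, ← sub_eq_add_neg, mulVec_mulVec, mulVec_mulVec,
    influence_matrix_eq_of_gsvd hU hX hJ hK hx, sub_mulVec_dotProduct_self_of_orthonormal hU]
  congr 2 with j
  rw [residualFilter, one_sub_div (hx j), add_sub_cancel_left]

end GSVD

theorem ne_zero_or_ne_zero_of_gsvd_blocks {n p k : Type*} (e : n ≃ p ⊕ k) {σ μ : p → ℝ}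
    (hμ : ∀ i, μ i ≠ 0) (j : n) : (Sum.elim σ 1 ∘ e) j ≠ 0 ∨ (Sum.elim μ 0 ∘ e) j ≠ 0 := by
  simp only [Function.comp_apply]
  rcases e j with i | i
  · exact Or.inr (hμ i)
  · exact Or.inl one_ne_zero

theorem tikhonov_residual_dotProduct_self_of_gsvd {m n p k : Type*} [Fintype m] [Fintype n]
    [Fintype p] [DecidableEq n] [DecidableEq p] [DecidableEq k] (e : n ≃ p ⊕ k)
    {J U : Matrix m n ℝ} {L : Matrix p n ℝ} {V : Matrix p p ℝ} {X : Matrix n n ℝ} {σ μ : p → ℝ}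
    (hU : Uᵀ * U = 1) (hV : Vᵀ * V = 1) (hX : IsUnit X.det)
    (hJ : J = U * (fromBlocks (diagonal σ) 0 0 (1 : Matrix k k ℝ)).submatrix e e * X⁻¹)
    (hL : L = V * (fromCols (diagonal μ) (0 : Matrix p k ℝ)).submatrix id e * X⁻¹)
    (hμ : ∀ i, μ i ≠ 0) {x : ℝ} (hx : 0 < x) (b : m → ℝ) :
    (b + J *ᵥ -((Jᵀ * J + x • (Lᵀ * L))⁻¹ *ᵥ (Jᵀ *ᵥ b))) ⬝ᵥ
        (b + J *ᵥ -((Jᵀ * J + x • (Lᵀ * L))⁻¹ *ᵥ (Jᵀ *ᵥ b))) =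
      b ⬝ᵥ b - (Uᵀ *ᵥ b) ⬝ᵥ (Uᵀ *ᵥ b) +
        filteredResidualSq (Sum.elim σ 1 ∘ e) (Sum.elim μ 0 ∘ e) (Uᵀ *ᵥ b) x := by
  refine tikhonov_residual_dotProduct_self hU hX (by rw [hJ, fromBlocks_diagonal_one_submatrix])
    (by
      rw [hL, transpose_mul_self_of_orthonormal hV, transpose_mul_self_fromCols_diagonal_zero]
      rfl)
    (fun j => (sq_add_mul_sq_pos (ne_zero_or_ne_zero_of_gsvd_blocks e hμ j) hx).ne') b

theorem lambda_q_continuous_in_data_general (m p k : ℕ)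
    (J : Matrix (Fin m) (Fin (p + k)) ℝ) (L : Matrix (Fin p) (Fin (p + k)) ℝ)
    (U : Matrix (Fin m) (Fin (p + k)) ℝ) (V : Matrix (Fin p) (Fin p) ℝ)
    (X : Matrix (Fin (p + k)) (Fin (p + k)) ℝ) (σ μ : Fin p → ℝ)
    (hU : Uᵀ * U = 1) (hV : Vᵀ * V = 1) (hX : IsUnit X.det)
    (hJ : J = U * (Matrix.fromBlocks (Matrix.diagonal σ) 0 0
              (1 : Matrix (Fin k) (Fin k) ℝ)).submatrix
            finSumFinEquiv.symm finSumFinEquiv.symm * X⁻¹)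
    (hL : L = V * (Matrix.fromCols (Matrix.diagonal μ)
              (0 : Matrix (Fin p) (Fin k) ℝ)).submatrix id finSumFinEquiv.symm * X⁻¹)
    (hμ0 : ∀ i, 0 < μ i)
    (Fv : Fin m → ℝ) (q : ℝ)
    (d : ℝ → (Fin m → ℝ) → Fin (p + k) → ℝ)
    (hd : ∀ (lam : ℝ) (y : Fin m → ℝ),
      d lam y = -((Jᵀ * J + lam • (Lᵀ * L))⁻¹.mulVec (Jᵀ.mulVec (Fv - y))))
    (ω : ℝ × (Fin m → ℝ) → ℝ)
    (hω : ∀ (lam : ℝ) (y : Fin m → ℝ),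
      ω (lam, y) = euclNorm (Fv - y + J.mulVec (d lam y)) ^ 2 - q ^ 2 * euclNorm (Fv - y) ^ 2)
    (lam₀ : ℝ) (hlam₀ : 0 < lam₀) (y₀ : Fin m → ℝ)
    (hroot : ω (lam₀, y₀) = 0)
    (hidx : ∃ i : Fin p, 0 < σ i ∧
      Uᵀ.mulVec (Fv - y₀) (finSumFinEquiv (Sum.inl i)) ≠ 0) :
    (∃ s : Set (ℝ × (Fin m → ℝ)), s ∈ nhds (lam₀, y₀) ∧ ContDiffOn ℝ 1 ω s) ∧
    0 < deriv (fun lam : ℝ => ω (lam, y₀)) lam₀ ∧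
    ∃ (s : Set (Fin m → ℝ)) (t : Set ℝ), IsOpen s ∧ y₀ ∈ s ∧ IsOpen t ∧ lam₀ ∈ t ∧
      ∃ g : (Fin m → ℝ) → ℝ,
        (ContinuousOn g s ∧ g y₀ = lam₀ ∧ ∀ y ∈ s, g y ∈ t ∧ ω (g y, y) = 0) ∧
        ∀ g' : (Fin m → ℝ) → ℝ,
          (ContinuousOn g' s ∧ g' y₀ = lam₀ ∧ ∀ y ∈ s, g' y ∈ t ∧ ω (g' y, y) = 0) →
          ∀ y ∈ s, g' y = g y := by
  obtain ⟨i₀, hσi₀, hc₀⟩ := hidx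
  set e : Fin (p + k) ≃ Fin p ⊕ Fin k := finSumFinEquiv.symm
  have hδν := ne_zero_or_ne_zero_of_gsvd_blocks e (σ := σ) fun i => (hμ0 i).ne'
  have hstrict y (hy : (Uᵀ *ᵥ (Fv - y)) (e.symm (Sum.inl i₀)) ≠ 0) :
      ∃ j, (Sum.elim σ 1 ∘ e) j ≠ 0 ∧ (Sum.elim μ 0 ∘ e) j ≠ 0 ∧ (Uᵀ *ᵥ (Fv - y)) j ≠ 0 :=
    ⟨_, by simpa using hσi₀.ne', by simpa using (hμ0 i₀).ne', hy⟩
  have hωΦ : ∀ z : ℝ × (Fin m → ℝ), 0 < z.1 →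
      ω z = gsvdDiscrepancy q (Sum.elim σ 1 ∘ e) (Sum.elim μ 0 ∘ e) U Fv z.1 z.2 := by
    rintro ⟨x, y⟩ hx
    rw [hω, hd, euclNorm_sq, euclNorm_sq,
      tikhonov_residual_dotProduct_self_of_gsvd e hU hV hX hJ hL (fun i => (hμ0 i).ne') hx]
    rfl
  have hreg : ContDiffOn ℝ 1 ω {z | 0 < z.1} := (contDiffOn_gsvdDiscrepancy hδν).congr hωΦ
  have hmono y hy : StrictMonoOn (fun x => ω (x, y)) (Ioi 0) :=
    (strictMonoOn_gsvdDiscrepancy hδν (hstrict y hy)).congr fun x hx => (hωΦ (x, y) hx).symm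
  refine ⟨⟨_, (isOpen_lt continuous_const continuous_fst).mem_nhds hlam₀, hreg⟩, ?_, ?_⟩
  · have hωΦ₀ : (fun x => ω (x, y₀)) =ᶠ[𝓝 lam₀] fun x => gsvdDiscrepancy q _ _ U Fv x y₀ :=
      (eventually_gt_nhds hlam₀).mono fun x hx => hωΦ (x, y₀) hx
    rw [hωΦ₀.deriv_eq]
    exact deriv_gsvdDiscrepancy_pos hδν (hstrict y₀ hc₀) hlam₀
  have hIcc : Icc (lam₀ / 2) (2 * lam₀) ⊆ Ioi 0 := fun x hx => lt_of_lt_of_le (by positivity) hx.1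
  have hlam₀_mem : lam₀ ∈ Ioo (lam₀ / 2) (2 * lam₀) := ⟨by linarith, by linarith⟩
  obtain ⟨s, -, hs, hy₀s, g, hg, hg_root⟩ := exists_continuousOn_root_of_strictMonoOn
    (s := {y | (Uᵀ *ᵥ (Fv - y)) (e.symm (Sum.inl i₀)) ≠ 0})
    (isOpen_ne_fun (by fun_prop) continuous_const) hc₀ hlam₀_mem hroot
    (hreg.continuousOn.mono fun z hz => hIcc hz.1) fun y hy => (hmono y hy).mono hIcc
  refine ⟨s, _, hs, hy₀s, isOpen_Ioo, hlam₀_mem, g,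
    ⟨hg, ((hg_root y₀ hy₀s).2.2 lam₀ hlam₀_mem hroot).symm,
      fun y hy => (hg_root y hy).imp_right And.left⟩,
    fun g' hg' y hy => (hg_root y hy).2.2 _ (hg'.2.2 y hy).1 (hg'.2.2 y hy).2⟩

/-- Continuity of the regularization parameter `λ^q` with respect to the data: with
`d(λ, y) = −(JᵀJ + λLᵀL)⁻¹Jᵀ(F − y)` and
`ω(λ, y) = ‖F − y + J d(λ, y)‖² − q²‖F − y‖²`, if `ω(λ₀, y₀) = 0` with `λ₀ > 0` and some
generalized singular pair has `σᵢ > 0` and `(Uᵀ(F − y₀))ᵢ ≠ 0`, then `ω` is continuously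
differentiable near `(λ₀, y₀)` with `∂ω/∂λ(λ₀, y₀) > 0`, and `λ^q` is implicitly defined
as a continuous function of `y` near `y₀`, uniquely. -/
theorem lambda_q_continuous_in_data (m p k : ℕ) (hp : 0 < p) (hm : p + k ≤ m)
    (J : Matrix (Fin m) (Fin (p + k)) ℝ) (L : Matrix (Fin p) (Fin (p + k)) ℝ)
    (hker : ∀ v : Fin (p + k) → ℝ, J.mulVec v = 0 → L.mulVec v = 0 → v = 0)
    (U : Matrix (Fin m) (Fin (p + k)) ℝ) (V : Matrix (Fin p) (Fin p) ℝ)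
    (X : Matrix (Fin (p + k)) (Fin (p + k)) ℝ) (σ μ : Fin p → ℝ)
    (hU : Uᵀ * U = 1) (hV : Vᵀ * V = 1) (hX : IsUnit X.det)
    (hJ : J = U * (Matrix.fromBlocks (Matrix.diagonal σ) 0 0
              (1 : Matrix (Fin k) (Fin k) ℝ)).submatrix
            finSumFinEquiv.symm finSumFinEquiv.symm * X⁻¹)
    (hL : L = V * (Matrix.fromCols (Matrix.diagonal μ)
              (0 : Matrix (Fin p) (Fin k) ℝ)).submatrix id finSumFinEquiv.symm * X⁻¹)
    (hσ0 : ∀ i, 0 ≤ σ i) (hσ1 : ∀ i, σ i ≤ 1) (hμ0 : ∀ i, 0 < μ i) (hμ1 : ∀ i, μ i ≤ 1)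
    (hσμ : ∀ i, σ i ^ 2 + μ i ^ 2 = 1)
    (Fv : Fin m → ℝ) (q : ℝ) (hq0 : 0 < q) (hq1 : q < 1)
    (d : ℝ → (Fin m → ℝ) → Fin (p + k) → ℝ)
    (hd : ∀ (lam : ℝ) (y : Fin m → ℝ),
      d lam y = -((Jᵀ * J + lam • (Lᵀ * L))⁻¹.mulVec (Jᵀ.mulVec (Fv - y))))
    (ω : ℝ × (Fin m → ℝ) → ℝ)
    (hω : ∀ (lam : ℝ) (y : Fin m → ℝ),
      ω (lam, y) = euclNorm (Fv - y + J.mulVec (d lam y)) ^ 2 - q ^ 2 * euclNorm (Fv - y) ^ 2)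
    (lam₀ : ℝ) (hlam₀ : 0 < lam₀) (y₀ : Fin m → ℝ)
    (hroot : ω (lam₀, y₀) = 0)
    (hidx : ∃ i : Fin p, 0 < σ i ∧
      Uᵀ.mulVec (Fv - y₀) (finSumFinEquiv (Sum.inl i)) ≠ 0) :
    (∃ s : Set (ℝ × (Fin m → ℝ)), s ∈ nhds (lam₀, y₀) ∧ ContDiffOn ℝ 1 ω s) ∧
    0 < deriv (fun lam : ℝ => ω (lam, y₀)) lam₀ ∧
    ∃ (s : Set (Fin m → ℝ)) (t : Set ℝ), IsOpen s ∧ y₀ ∈ s ∧ IsOpen t ∧ lam₀ ∈ t ∧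
      ∃ g : (Fin m → ℝ) → ℝ,
        (ContinuousOn g s ∧ g y₀ = lam₀ ∧ ∀ y ∈ s, g y ∈ t ∧ ω (g y, y) = 0) ∧
        ∀ g' : (Fin m → ℝ) → ℝ,
          (ContinuousOn g' s ∧ g' y₀ = lam₀ ∧ ∀ y ∈ s, g' y ∈ t ∧ ω (g' y, y) = 0) →
          ∀ y ∈ s, g' y = g y :=
  lambda_q_continuous_in_data_general m p k J L U V X σ μ hU hV hX hJ hL hμ0 Fv q d hd ω hω lam₀
    hlam₀ y₀ hroot hidx
end

section
/- Let F : ℝⁿ → ℝᵐ be continuously differentiable with Jacobian J(x), L ∈ ℝ^{p×n}, y ∈ ℝᵐ, c > 0. Let x* satisfy F(x*) = y and suppose the TCC-L inequality ‖J(x)(x*−x) − F(x*) + F(x)‖ ≤ c‖x*−x‖_L ‖F(x*)−F(x)‖ holds at the point x = x_k. Let λ_k > 0 and suppose J(x_k)ᵀJ(x_k) + λ_k LᵀL is invertible, and define x_{k+1} := x_k − (J(x_k)ᵀJ(x_k) + λ_k LᵀL)⁻¹ J(x_k)ᵀ(F(x_k) − y). Then ‖x_{k+1} − x*‖ ≤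 ‖(J(x_k)ᵀJ(x_k) + λ_k LᵀL)⁻¹‖ · ( ‖J(x_k)ᵀ‖·c·‖F(x_k) − y‖ + λ_k‖Lᵀ‖ ) · ‖x_k − x*‖_L. -/
open Matrix

/-- Spectral (operator) norm of a real matrix with respect to Euclidean norms. -/
noncomputable def specNorm {a b : ℕ} (A : Matrix (Fin a) (Fin b) ℝ) : ℝ :=
  ‖(Matrix.toEuclideanLin A).toContinuousLinearMap‖

/-!
With `A = JᵀJ + λLᵀL`, `e = x_k − x*` and `F(x*) = y`, the step satisfies
`x_{k+1} − x* = A⁻¹(Jᵀ(Je − (F(x_k) − y)) + λLᵀLe)`. The residual `Je − (F(x_k) − F(x*))` is,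
up to sign, the vector controlled by the TCC-L inequality, so the bound follows from the
operator-norm estimate and the triangle inequality.
-/

lemma specNorm_nonneg {a b : ℕ} (A : Matrix (Fin a) (Fin b) ℝ) : 0 ≤ specNorm A :=
  norm_nonneg _

lemma euclNorm_mulVec_le {a b : ℕ} (A : Matrix (Fin a) (Fin b) ℝ) (v : Fin b → ℝ) :
    euclNorm (A *ᵥ v) ≤ specNorm A * euclNorm v :=
  (Matrix.toEuclideanLin A).toContinuousLinearMap.le_opNorm _

lemma euclNorm_add_le {k : ℕ} (u v : Fin k → ℝ) :
    euclNorm (u + v) ≤ euclNorm u + euclNorm v := by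
  simpa only [euclNorm, map_add] using norm_add_le _ _

lemma euclNorm_smul {k : ℕ} (t : ℝ) (v : Fin k → ℝ) :
    euclNorm (t • v) = |t| * euclNorm v := by
  simp only [euclNorm, map_smul, norm_smul, Real.norm_eq_abs]

lemma euclNorm_neg {k : ℕ} (v : Fin k → ℝ) : euclNorm (-v) = euclNorm v := by
  simp only [euclNorm, map_neg, norm_neg]

lemma euclNorm_sub_comm {k : ℕ} (u v : Fin k → ℝ) : euclNorm (u - v) = euclNorm (v - u) := by
  rw [← neg_sub, euclNorm_neg]

lemma euclNorm_mulVec_sub_sub_add {k l : ℕ} (A : Matrix (Fin k) (Fin l) ℝ) (u v : Fin l → ℝ)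
    (a b : Fin k → ℝ) : euclNorm (A *ᵥ (u - v) - a + b) = euclNorm (A *ᵥ (v - u) - (b - a)) := by
  rw [← euclNorm_neg, ← neg_sub v, mulVec_neg]
  congr 1
  abel

lemma sub_nonsing_inv_mulVec_transpose_mulVec_eq {R m n p : Type*} [CommRing R]
    [Fintype m] [Fintype n] [DecidableEq n] [Fintype p]
    (J : Matrix m n R) (L : Matrix p n R) (lam : R) (hA : IsUnit (Jᵀ * J + lam • (Lᵀ * L)).det)
    (e : n → R) (b : m → R) :
    e - (Jᵀ * J + lam • (Lᵀ * L))⁻¹ *ᵥ (Jᵀ *ᵥ b) =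
      (Jᵀ * J + lam • (Lᵀ * L))⁻¹ *ᵥ (Jᵀ *ᵥ (J *ᵥ e - b) + lam • (Lᵀ *ᵥ (L *ᵥ e))) := by
  have hAe : Jᵀ *ᵥ (J *ᵥ e - b) + lam • (Lᵀ *ᵥ (L *ᵥ e)) =
      (Jᵀ * J + lam • (Lᵀ * L)) *ᵥ e - Jᵀ *ᵥ b := by
    rw [add_mulVec, smul_mulVec, ← mulVec_mulVec, ← mulVec_mulVec, mulVec_sub]
    abel
  rw [hAe, mulVec_sub, mulVec_mulVec e, nonsing_inv_mul _ hA, one_mulVec]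

lemma euclNorm_mulVec_add_smul_mulVec_le {a b c d : ℕ} (M : Matrix (Fin a) (Fin b) ℝ)
    (B : Matrix (Fin b) (Fin c) ℝ) (C : Matrix (Fin b) (Fin d) ℝ) {t : ℝ} (ht : 0 ≤ t)
    (u : Fin c → ℝ) (v : Fin d → ℝ) :
    euclNorm (M *ᵥ (B *ᵥ u + t • (C *ᵥ v))) ≤
      specNorm M * (specNorm B * euclNorm u + t * (specNorm C * euclNorm v)) := by
  calc euclNorm (M *ᵥ (B *ᵥ u + t • (C *ᵥ v)))
      ≤ specNorm M * euclNorm (B *ᵥ u + t • (C *ᵥ v)) := euclNorm_mulVec_le _ _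
    _ ≤ specNorm M * (euclNorm (B *ᵥ u) + euclNorm (t • (C *ᵥ v))) :=
        mul_le_mul_of_nonneg_left (euclNorm_add_le _ _) (specNorm_nonneg M)
    _ = specNorm M * (euclNorm (B *ᵥ u) + t * euclNorm (C *ᵥ v)) := by
        rw [euclNorm_smul, abs_of_nonneg ht]
    _ ≤ specNorm M * (specNorm B * euclNorm u + t * (specNorm C * euclNorm v)) := by
        gcongr
        · exact specNorm_nonneg M
        · exact euclNorm_mulVec_le B u
        · exact euclNorm_mulVec_le C v

theorem lmmss_euclidean_bound_by_seminorm_general (n m p : ℕ)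
    (F : (Fin n → ℝ) → (Fin m → ℝ)) (J : (Fin n → ℝ) → Matrix (Fin m) (Fin n) ℝ)
    (L : Matrix (Fin p) (Fin n) ℝ) (y : Fin m → ℝ) (c : ℝ)
    (xstar : Fin n → ℝ) (hxstar : F xstar = y)
    (xk : Fin n → ℝ)
    (htcc : euclNorm ((J xk).mulVec (xstar - xk) - F xstar + F xk) ≤
      c * euclNorm (L.mulVec (xstar - xk)) * euclNorm (F xstar - F xk))
    (lamk : ℝ) (hlamk : 0 < lamk)
    (hinv : IsUnit ((J xk)ᵀ * J xk + lamk • (Lᵀ * L)).det)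
    (xnext : Fin n → ℝ)
    (hnext : xnext = xk -
      ((J xk)ᵀ * J xk + lamk • (Lᵀ * L))⁻¹.mulVec ((J xk)ᵀ.mulVec (F xk - y))) :
    euclNorm (xnext - xstar) ≤
      specNorm (((J xk)ᵀ * J xk + lamk • (Lᵀ * L))⁻¹) *
        (specNorm ((J xk)ᵀ) * c * euclNorm (F xk - y) + lamk * specNorm Lᵀ) *
        euclNorm (L.mulVec (xk - xstar)) := by
  subst hxstar hnext
  set A := (J xk)ᵀ * J xk + lamk • (Lᵀ * L)
  have hres : euclNorm (J xk *ᵥ (xk - xstar) - (F xk - F xstar)) ≤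
      c * euclNorm (L *ᵥ (xk - xstar)) * euclNorm (F xk - F xstar) := by
    rwa [euclNorm_mulVec_sub_sub_add, ← neg_sub xk, mulVec_neg, euclNorm_neg,
      euclNorm_sub_comm (F xstar)] at htcc
  calc euclNorm (xk - A⁻¹ *ᵥ ((J xk)ᵀ *ᵥ (F xk - F xstar)) - xstar)
      = euclNorm (A⁻¹ *ᵥ ((J xk)ᵀ *ᵥ (J xk *ᵥ (xk - xstar) - (F xk - F xstar)) +
          lamk • (Lᵀ *ᵥ (L *ᵥ (xk - xstar))))) := by
        rw [sub_right_comm, sub_nonsing_inv_mulVec_transpose_mulVec_eq _ _ _ hinv]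
    _ ≤ specNorm A⁻¹ * (specNorm (J xk)ᵀ * euclNorm (J xk *ᵥ (xk - xstar) - (F xk - F xstar)) +
          lamk * (specNorm Lᵀ * euclNorm (L *ᵥ (xk - xstar)))) :=
        euclNorm_mulVec_add_smul_mulVec_le _ _ _ hlamk.le _ _
    _ ≤ specNorm A⁻¹ * (specNorm (J xk)ᵀ * (c * euclNorm (L *ᵥ (xk - xstar)) *
          euclNorm (F xk - F xstar)) + lamk * (specNorm Lᵀ * euclNorm (L *ᵥ (xk - xstar)))) := by
        gcongr
        · exact specNorm_nonneg _
        · exact specNorm_nonneg _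
    _ = specNorm A⁻¹ * (specNorm (J xk)ᵀ * c * euclNorm (F xk - F xstar) + lamk * specNorm Lᵀ) *
          euclNorm (L *ᵥ (xk - xstar)) := by ring

/-- One-step bound of the Euclidean error by the `L`-seminorm error: if the TCC-L
inequality holds at `x_k` (against a solution `x*` of `F(x) = y`) and
`x_{k+1} = x_k − (J_kᵀJ_k + λ_k LᵀL)⁻¹ J_kᵀ(F(x_k) − y)`, then
`‖x_{k+1} − x*‖ ≤ ‖(J_kᵀJ_k + λ_k LᵀL)⁻¹‖(‖J_kᵀ‖·c·‖F(x_k) − y‖ + λ_k‖Lᵀ‖)‖x_k − x*‖_L`. -/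
theorem lmmss_euclidean_bound_by_seminorm (n m p : ℕ)
    (F : (Fin n → ℝ) → (Fin m → ℝ)) (J : (Fin n → ℝ) → Matrix (Fin m) (Fin n) ℝ)
    (hF : ContDiff ℝ 1 F)
    (hJ : ∀ x, HasFDerivAt F ((J x).mulVecLin.toContinuousLinearMap) x)
    (L : Matrix (Fin p) (Fin n) ℝ) (y : Fin m → ℝ) (c : ℝ) (hc : 0 < c)
    (xstar : Fin n → ℝ) (hxstar : F xstar = y)
    (xk : Fin n → ℝ)
    (htcc : euclNorm ((J xk).mulVec (xstar - xk) - F xstar + F xk) ≤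
      c * euclNorm (L.mulVec (xstar - xk)) * euclNorm (F xstar - F xk))
    (lamk : ℝ) (hlamk : 0 < lamk)
    (hinv : IsUnit ((J xk)ᵀ * J xk + lamk • (Lᵀ * L)).det)
    (xnext : Fin n → ℝ)
    (hnext : xnext = xk -
      ((J xk)ᵀ * J xk + lamk • (Lᵀ * L))⁻¹.mulVec ((J xk)ᵀ.mulVec (F xk - y))) :
    euclNorm (xnext - xstar) ≤
      specNorm (((J xk)ᵀ * J xk + lamk • (Lᵀ * L))⁻¹) *
        (specNorm ((J xk)ᵀ) * c * euclNorm (F xk - y) + lamk * specNorm Lᵀ) *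
        euclNorm (L.mulVec (xk - xstar)) :=
  lmmss_euclidean_bound_by_seminorm_general n m p F J L y c xstar hxstar xk htcc lamk hlamk hinv
    xnext hnext
end

section
/- (One-step estimate with noisy data) Let F : ℝⁿ → ℝᵐ be continuously differentiable with Jacobian J(x), L ∈ ℝ^{p×n}, y, y^δ ∈ ℝᵐ with ‖y − y^δ‖ ≤ δ, c > 0 and τ > 0. Let x* satisfy F(x*) = y and suppose the TCC-L inequality ‖J(x)(x*−x) − F(x*) + F(x)‖ ≤ c‖x*−x‖_L ‖F(x*)−F(x)‖ holds at the point x. If τδ < ‖F(x) − y^δ‖, then ‖F(x) − y^δ + J(x)(x* − x)‖ ≤ ((1 + c(1+τ)‖x − x*‖_L)/τ) · ‖F(x) − y^δ‖. -/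
open Matrix

lemma euclNorm_mulVec_sub_comm {k l : ℕ} (A : Matrix (Fin k) (Fin l) ℝ) (u v : Fin l → ℝ) :
    euclNorm (A *ᵥ (u - v)) = euclNorm (A *ᵥ (v - u)) := by
  rw [← neg_sub, mulVec_neg, euclNorm_neg]

section NoisyEstimate

variable {E : Type*} [SeminormedAddCommGroup E] {Fx Fstar yδ Jh : E} {a δ τ : ℝ}

lemma norm_sub_le_noise_add_residual (hnoise : ‖Fstar - yδ‖ ≤ δ) :
    ‖Fstar - Fx‖ ≤ δ + ‖Fx - yδ‖ :=
  calc ‖Fstar - Fx‖ = ‖(Fstar - yδ) - (Fx - yδ)‖ := by rw [sub_sub_sub_cancel_right]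
    _ ≤ ‖Fstar - yδ‖ + ‖Fx - yδ‖ := norm_sub_le _ _
    _ ≤ δ + ‖Fx - yδ‖ := by gcongr

/-- The abstract form of the one-step estimate: `Jh` stands for `J(x)(x* − x)` and `a` for
`c‖x − x*‖_L`. -/
lemma norm_residual_add_linearization_le (ha : 0 ≤ a) (hτ : 0 < τ)
    (hnoise : ‖Fstar - yδ‖ ≤ δ) (htcc : ‖Jh - Fstar + Fx‖ ≤ a * ‖Fstar - Fx‖)
    (hdisc : τ * δ < ‖Fx - yδ‖) :
    ‖Fx - yδ + Jh‖ ≤ (1 + a * (1 + τ)) / τ * ‖Fx - yδ‖ := by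
  set r := ‖Fx - yδ‖
  have hδr : δ ≤ r / τ := by rw [le_div_iff₀ hτ]; linarith
  calc ‖Fx - yδ + Jh‖ = ‖(Jh - Fstar + Fx) + (Fstar - yδ)‖ := by congr 1; abel
    _ ≤ ‖Jh - Fstar + Fx‖ + ‖Fstar - yδ‖ := norm_add_le _ _
    _ ≤ a * (δ + r) + δ := by
        gcongr
        exact htcc.trans (by gcongr; exact norm_sub_le_noise_add_residual hnoise)
    _ = (1 + a) * δ + a * r := by ring
    _ ≤ (1 + a) * (r / τ) + a * r := by gcongr
    _ = (1 + a * (1 + τ)) / τ * r := by field_simp; ring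

end NoisyEstimate

theorem noisy_one_step_estimate_general (n m p : ℕ)
    (F : (Fin n → ℝ) → (Fin m → ℝ)) (J : (Fin n → ℝ) → Matrix (Fin m) (Fin n) ℝ)
    (L : Matrix (Fin p) (Fin n) ℝ) (y yδ : Fin m → ℝ) (δ : ℝ)
    (hnoise : euclNorm (y - yδ) ≤ δ)
    (c τ : ℝ) (hc : 0 < c) (hτ : 0 < τ)
    (xstar : Fin n → ℝ) (hxstar : F xstar = y)
    (x : Fin n → ℝ)
    (htcc : euclNorm ((J x).mulVec (xstar - x) - F xstar + F x) ≤
      c * euclNorm (L.mulVec (xstar - x)) * euclNorm (F xstar - F x))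
    (hdisc : τ * δ < euclNorm (F x - yδ)) :
    euclNorm (F x - yδ + (J x).mulVec (xstar - x)) ≤
      ((1 + c * (1 + τ) * euclNorm (L.mulVec (x - xstar))) / τ) *
        euclNorm (F x - yδ) := by
  rw [euclNorm_mulVec_sub_comm L xstar x, hxstar] at htcc
  rw [mul_right_comm c]
  have ha : 0 ≤ c * euclNorm (L *ᵥ (x - xstar)) := by unfold euclNorm; positivity
  simp only [euclNorm, map_sub, map_add] at *
  exact norm_residual_add_linearization_le ha hτ hnoise htcc hdisc

/-- One-step estimate with noisy data: if `‖y − yδ‖ ≤ δ`, the TCC-L inequality holds at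
`x` (against a solution `x*` of `F(x) = y`), and the discrepancy criterion is not yet
met, i.e. `τδ < ‖F(x) − yδ‖`, then
`‖F(x) − yδ + J(x)(x* − x)‖ ≤ ((1 + c(1+τ)‖x − x*‖_L)/τ)·‖F(x) − yδ‖`. -/
theorem noisy_one_step_estimate (n m p : ℕ)
    (F : (Fin n → ℝ) → (Fin m → ℝ)) (J : (Fin n → ℝ) → Matrix (Fin m) (Fin n) ℝ)
    (hF : ContDiff ℝ 1 F)
    (hJ : ∀ x, HasFDerivAt F ((J x).mulVecLin.toContinuousLinearMap) x)
    (L : Matrix (Fin p) (Fin n) ℝ) (y yδ : Fin m → ℝ) (δ : ℝ)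
    (hnoise : euclNorm (y - yδ) ≤ δ)
    (c τ : ℝ) (hc : 0 < c) (hτ : 0 < τ)
    (xstar : Fin n → ℝ) (hxstar : F xstar = y)
    (x : Fin n → ℝ)
    (htcc : euclNorm ((J x).mulVec (xstar - x) - F xstar + F x) ≤
      c * euclNorm (L.mulVec (xstar - x)) * euclNorm (F xstar - F x))
    (hdisc : τ * δ < euclNorm (F x - yδ)) :
    euclNorm (F x - yδ + (J x).mulVec (xstar - x)) ≤
      ((1 + c * (1 + τ) * euclNorm (L.mulVec (x - xstar))) / τ) *
        euclNorm (F x - yδ) :=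
  noisy_one_step_estimate_general n m p F J L y yδ δ hnoise c τ hc hτ xstar hxstar x htcc hdisc
end
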